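/- arXiv:2311.15313 — 2 statements merged into one kernel-verified Lean document; each statement's English description precedes it below -/
import Mathlib

section
/- Let R be an (N+1)×(N+1) Hermitian positive definite matrix and let x, y be complex vectors with unit-modulus entries. If Re(yᴴRx) ≥ xᴴRx and y ≠ x, then yᴴRy > xᴴRx. -/
open Matrix
open scoped ComplexOrder

namespace Matrix

variable {𝕜 n : Type*} [RCLike 𝕜] [Fintype n] {A : Matrix n n 𝕜}

lemma IsHermitian.re_star_dotProduct_mulVec_comm (hA : A.IsHermitian) (x y : n → 𝕜) :
    RCLike.re (star x ⬝ᵥ A *ᵥ y) = RCLike.re (star y ⬝ᵥ A *ᵥ x) := by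
  have hconj : star (star y ⬝ᵥ A *ᵥ x) = star x ⬝ᵥ A *ᵥ y := by
    rw [star_dotProduct, star_star, star_mulVec, hA.eq, dotProduct_mulVec]
  rw [← hconj, RCLike.star_def, RCLike.conj_re]

lemma IsHermitian.re_star_sub_dotProduct_mulVec_sub (hA : A.IsHermitian) (x y : n → 𝕜) :
    RCLike.re (star (y - x) ⬝ᵥ A *ᵥ (y - x)) =
      RCLike.re (star y ⬝ᵥ A *ᵥ y) - 2 * RCLike.re (star y ⬝ᵥ A *ᵥ x)
        + RCLike.re (star x ⬝ᵥ A *ᵥ x) := by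
  simp only [star_sub, mulVec_sub, sub_dotProduct, dotProduct_sub, map_sub,
    hA.re_star_dotProduct_mulVec_comm x y]
  ring

/-- `yᴴAy - xᴴAx ≥ yᴴAy - 2 re (yᴴAx) + xᴴAx = (y - x)ᴴA(y - x) > 0`. -/
lemma PosDef.re_dotProduct_lt_of_le_re (hA : A.PosDef) {x y : n → 𝕜} (hxy : y ≠ x)
    (hge : RCLike.re (star x ⬝ᵥ A *ᵥ x) ≤ RCLike.re (star y ⬝ᵥ A *ᵥ x)) :
    RCLike.re (star x ⬝ᵥ A *ᵥ x) < RCLike.re (star y ⬝ᵥ A *ᵥ y) := by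
  have hpos := hA.re_dotProduct_pos (sub_ne_zero.mpr hxy)
  rw [hA.isHermitian.re_star_sub_dotProduct_mulVec_sub] at hpos
  linarith

end Matrix

theorem stmt0_general {N : ℕ} (R : Matrix (Fin (N+1)) (Fin (N+1)) ℂ)
    (hR : R.PosDef) (x y : Fin (N+1) → ℂ)
    (hxy : y ≠ x)
    (hge : (star x ⬝ᵥ R.mulVec x).re ≤ (star y ⬝ᵥ R.mulVec x).re) :
    (star x ⬝ᵥ R.mulVec x).re < (star y ⬝ᵥ R.mulVec y).re :=
  hR.re_dotProduct_lt_of_le_re hxy hge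

theorem stmt0 {N : ℕ} (R : Matrix (Fin (N+1)) (Fin (N+1)) ℂ)
    (hR : R.PosDef) (x y : Fin (N+1) → ℂ)
    (hx : ∀ n, ‖x n‖ = 1) (hy : ∀ n, ‖y n‖ = 1)
    (hxy : y ≠ x)
    (hge : (star x ⬝ᵥ R.mulVec x).re ≤ (star y ⬝ᵥ R.mulVec x).re) :
    (star x ⬝ᵥ R.mulVec x).re < (star y ⬝ᵥ R.mulVec y).re :=
  stmt0_general R hR x y hxy hge
end

section
/- Let R be an (N+1)×(N+1) Hermitian positive definite matrix, let x be a unit-modulus vector, and define y by y_n = e^{i·arg((Rx)_n)} for each n. Then Re(yᴴRx) = max over unit-modulus vectors z of Re(zᴴRx), and Re(yᴴRx) ≥ xᴴRx. -/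
/-! Termwise, `Re (conj zₙ wₙ) ≤ |wₙ|` for `|zₙ| = 1`, with equality when `zₙ` carries the phase
of `wₙ`; so `y` attains the maximum, and `z = x` is one of the competitors. -/

open Matrix
open scoped ComplexOrder

namespace Complex

lemma star_exp_I_mul_arg_mul_self (w : ℂ) : star (exp (I * arg w)) * w = ‖w‖ := by
  nth_rw 2 [← norm_mul_exp_arg_mul_I w]
  rw [mul_left_comm, mul_comm _ I, star_def, ← normSq_eq_conj_mul_self, normSq_eq_norm_sq,
    norm_exp_I_mul_ofReal, one_pow, ofReal_one, mul_one]

lemma re_star_mul_le_norm {z : ℂ} (hz : ‖z‖ = 1) (w : ℂ) : (star z * w).re ≤ ‖w‖ :=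
  (re_le_norm _).trans_eq (by rw [norm_mul, norm_star, hz, one_mul])

end Complex

open Complex

section

variable {ι : Type*} [Fintype ι]

lemma re_star_dotProduct_le_sum_norm {z : ι → ℂ} (hz : ∀ i, ‖z i‖ = 1) (w : ι → ℂ) :
    (star z ⬝ᵥ w).re ≤ ∑ i, ‖w i‖ := by
  rw [dotProduct, re_sum]
  exact Finset.sum_le_sum fun i _ => re_star_mul_le_norm (hz i) (w i)

lemma star_dotProduct_eq_sum_norm_of_eq_exp_arg {y w : ι → ℂ}
    (hy : ∀ i, y i = exp (I * arg (w i))) : star y ⬝ᵥ w = ∑ i, (‖w i‖ : ℂ) := by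
  simp only [dotProduct, Pi.star_apply, hy, star_exp_I_mul_arg_mul_self]

theorem isGreatest_re_star_dotProduct_of_eq_exp_arg {y w : ι → ℂ}
    (hy : ∀ i, y i = exp (I * arg (w i))) :
    IsGreatest {r : ℝ | ∃ z : ι → ℂ, (∀ i, ‖z i‖ = 1) ∧ r = (star z ⬝ᵥ w).re}
      (star y ⬝ᵥ w).re := by
  have hre : (star y ⬝ᵥ w).re = ∑ i, ‖w i‖ := by
    rw [star_dotProduct_eq_sum_norm_of_eq_exp_arg hy, ← ofReal_sum, ofReal_re]
  refine ⟨⟨y, fun i => by rw [hy, norm_exp_I_mul_ofReal], rfl⟩, ?_⟩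
  rintro r ⟨z, hz, rfl⟩
  exact hre ▸ re_star_dotProduct_le_sum_norm hz w

end

theorem stmt1_general {N : ℕ} (R : Matrix (Fin (N+1)) (Fin (N+1)) ℂ)
    (x : Fin (N+1) → ℂ) (hx : ∀ n, ‖x n‖ = 1)
    (y : Fin (N+1) → ℂ)
    (hy : ∀ n, y n = Complex.exp (Complex.I * (Complex.arg (R.mulVec x n) : ℂ))) :
    IsGreatest {r : ℝ | ∃ z : Fin (N+1) → ℂ, (∀ n, ‖z n‖ = 1) ∧
        r = (star z ⬝ᵥ R.mulVec x).re}
      ((star y ⬝ᵥ R.mulVec x).re) ∧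
    (star x ⬝ᵥ R.mulVec x).re ≤ (star y ⬝ᵥ R.mulVec x).re := by
  have hmax := isGreatest_re_star_dotProduct_of_eq_exp_arg hy
  exact ⟨hmax, hmax.2 ⟨x, hx, rfl⟩⟩

theorem stmt1 {N : ℕ} (R : Matrix (Fin (N+1)) (Fin (N+1)) ℂ) (hR : R.PosDef)
    (x : Fin (N+1) → ℂ) (hx : ∀ n, ‖x n‖ = 1)
    (y : Fin (N+1) → ℂ)
    (hy : ∀ n, y n = Complex.exp (Complex.I * (Complex.arg (R.mulVec x n) : ℂ))) :
    IsGreatest {r : ℝ | ∃ z : Fin (N+1) → ℂ, (∀ n, ‖z n‖ = 1) ∧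
        r = (star z ⬝ᵥ R.mulVec x).re}
      ((star y ⬝ᵥ R.mulVec x).re) ∧
    (star x ⬝ᵥ R.mulVec x).re ≤ (star y ⬝ᵥ R.mulVec x).re :=
  stmt1_general R x hx y hy
end
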